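/- arXiv:2111.07551 — 12 statements merged into one kernel-verified Lean document; each statement's English description precedes it below -/
import Mathlib

section
/- In a finite inverse monoid S, the product of two factorizable elements is factorizable; hence S is factorizable if and only if every element of a generating set of S is factorizable. -/
/-- An element of a monoid is factorizable if it is the product of a unit
and an idempotent. -/
def Factorizable {M : Type*} [Monoid M] (s : M) : Prop :=
  ∃ u e : M, IsUnit u ∧ e * e = e ∧ s = u * e

/-!
In an inverse monoid a product of idempotents is again idempotent: for `x` the inverse of `e * f`,
the element `f * x * e` is also an inverse of `e * f`, hence equals `x`, and is visibly idempotent;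
an idempotent is its own inverse, so `e * f = inv x = x`. Consequently
`(u * e) * (v * f) = (u * v) * ((v⁻¹ * e * v) * f)` is factorizable, and so is
`inv (u * e) = e * u⁻¹ = u⁻¹ * (u * e * u⁻¹)`. The factorizable elements therefore form a submonoid
closed under `inv`, which contains the whole monoid as soon as it contains a generating set.
-/

section InverseMonoid

variable {M : Type*} [Monoid M] {inv : M → M}

theorem inv_inv_of_unique_inverse (h1 : ∀ s : M, s * inv s * s = s)
    (h2 : ∀ s : M, inv s * s * inv s = inv s)
    (huniq : ∀ s t : M, s * t * s = s → t * s * t = t → t = inv s) (s : M) :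
    inv (inv s) = s :=
  (huniq (inv s) s (h2 s) (h1 s)).symm

theorem IsIdempotentElem.inv_eq_self_of_unique_inverse
    (huniq : ∀ s t : M, s * t * s = s → t * s * t = t → t = inv s) {e : M}
    (he : IsIdempotentElem e) : inv e = e := by
  have hee : e * e * e = e := by rw [he.eq, he.eq]
  exact (huniq e e hee hee).symm

theorem IsIdempotentElem.mul_of_unique_inverse (h1 : ∀ s : M, s * inv s * s = s)
    (h2 : ∀ s : M, inv s * s * inv s = inv s)
    (huniq : ∀ s t : M, s * t * s = s → t * s * t = t → t = inv s) {e f : M}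
    (he : IsIdempotentElem e) (hf : IsIdempotentElem f) : IsIdempotentElem (e * f) := by
  set x := inv (e * f) with hx_def
  have hxefx : x * (e * (f * (x * e))) = x * e := by
    simpa only [mul_assoc] using congrArg (· * e) (h2 (e * f))
  have hfxe : f * x * e = x := by
    refine huniq (e * f) (f * x * e) ?_ ?_
    · simpa only [mul_assoc, he.mul_self_mul, hf.mul_self_mul] using h1 (e * f)
    · simp only [mul_assoc, he.mul_self_mul, hf.mul_self_mul, hxefx]
  have hx : IsIdempotentElem x := by
    rw [IsIdempotentElem, ← hfxe]
    simp only [mul_assoc, hxefx]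
  rw [← inv_inv_of_unique_inverse h1 h2 huniq (e * f), ← hx_def,
    hx.inv_eq_self_of_unique_inverse huniq]
  exact hx

end InverseMonoid

theorem IsIdempotentElem.units_conj {M : Type*} [Monoid M] {e : M} (he : IsIdempotentElem e)
    (u : Mˣ) : IsIdempotentElem (↑u⁻¹ * e * u) := by
  simp only [IsIdempotentElem, mul_assoc, Units.mul_inv_cancel_left, he.mul_self_mul]

theorem factorizable_one {M : Type*} [Monoid M] : Factorizable (1 : M) :=
  ⟨1, 1, isUnit_one, mul_one 1, (mul_one 1).symm⟩

theorem Factorizable.mul {M : Type*} [Monoid M]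
    (hmul : ∀ e f : M, IsIdempotentElem e → IsIdempotentElem f → IsIdempotentElem (e * f))
    {s t : M} (hs : Factorizable s) (ht : Factorizable t) : Factorizable (s * t) := by
  obtain ⟨u, e, hu, (he : IsIdempotentElem e), rfl⟩ := hs
  obtain ⟨_, f, ⟨v, rfl⟩, (hf : IsIdempotentElem f), rfl⟩ := ht
  refine ⟨u * v, ↑v⁻¹ * e * v * f, hu.mul v.isUnit, hmul _ _ (he.units_conj v) hf, ?_⟩
  simp only [mul_assoc, Units.mul_inv_cancel_left]

theorem Factorizable.inv_of_unique_inverse {M : Type*} [Monoid M] {inv : M → M}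
    (huniq : ∀ s t : M, s * t * s = s → t * s * t = t → t = inv s) {s : M}
    (hs : Factorizable s) : Factorizable (inv s) := by
  obtain ⟨_, e, ⟨u, rfl⟩, (he : IsIdempotentElem e), rfl⟩ := hs
  have hinv : e * ↑u⁻¹ = inv (u * e) := by
    refine huniq _ _ ?_ ?_ <;>
      simp only [mul_assoc, Units.inv_mul_cancel_left, he.mul_self_mul, he.eq]
  refine ⟨↑u⁻¹, _, u⁻¹.isUnit, he.units_conj u⁻¹, ?_⟩
  rw [← hinv]
  simp only [inv_inv, mul_assoc, Units.inv_mul_cancel_left]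

def factorizableSubmonoid (M : Type*) [Monoid M]
    (hmul : ∀ e f : M, IsIdempotentElem e → IsIdempotentElem f → IsIdempotentElem (e * f)) :
    Submonoid M where
  carrier := {s | Factorizable s}
  mul_mem' := Factorizable.mul hmul
  one_mem' := factorizable_one

theorem factorizable_mul_and_generators_general (M : Type*) [Monoid M]
    (inv : M → M)
    (h1 : ∀ s : M, s * inv s * s = s) (h2 : ∀ s : M, inv s * s * inv s = inv s)
    (huniq : ∀ s t : M, s * t * s = s → t * s * t = t → t = inv s) :
    (∀ s t : M, Factorizable s → Factorizable t → Factorizable (s * t)) ∧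
    (∀ G : Set M, Submonoid.closure (G ∪ inv '' G) = ⊤ →
      ((∀ x : M, Factorizable x) ↔ ∀ g ∈ G, Factorizable g)) := by
  have hmul : ∀ e f : M, IsIdempotentElem e → IsIdempotentElem f → IsIdempotentElem (e * f) :=
    fun _ _ he hf => he.mul_of_unique_inverse h1 h2 huniq hf
  refine ⟨fun _ _ => Factorizable.mul hmul, fun G hG => ⟨fun h g _ => h g, fun hgen x => ?_⟩⟩
  have hgen_le : Submonoid.closure (G ∪ inv '' G) ≤ factorizableSubmonoid M hmul := by
    rw [Submonoid.closure_le]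
    rintro _ (hg | ⟨g, hg, rfl⟩)
    · exact hgen _ hg
    · exact (hgen g hg).inv_of_unique_inverse huniq
  exact hgen_le (hG ▸ Submonoid.mem_top x)

/-- In a finite inverse monoid (every element has a unique inverse, given by
`inv`), the product of two factorizable elements is factorizable; hence the
monoid is factorizable iff every element of a generating set (as an inverse
monoid, i.e. generators together with their inverses) is factorizable. -/
theorem factorizable_mul_and_generators (M : Type*) [Monoid M] [Fintype M]
    (inv : M → M)
    (h1 : ∀ s : M, s * inv s * s = s) (h2 : ∀ s : M, inv s * s * inv s = inv s)
    (huniq : ∀ s t : M, s * t * s = s → t * s * t = t → t = inv s) :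
    (∀ s t : M, Factorizable s → Factorizable t → Factorizable (s * t)) ∧
    (∀ G : Set M, Submonoid.closure (G ∪ inv '' G) = ⊤ →
      ((∀ x : M, Factorizable x) ↔ ∀ g ∈ G, Factorizable g)) :=
  factorizable_mul_and_generators_general M inv h1 h2 huniq
end

section
/- The relation ∼_o (a ∼_o b iff there exist g, h in S with ag = gb and bh = ha) is an equivalence relation on any semigroup S with identity, and it coincides with conjugacy when S is a group. -/
/-! Transitivity holds because intertwiners compose: `a g = g b` and `b g' = g' c` give
`a (g g') = (g g') c`. In a group a single intertwiner `a g = g b` already makes `a` and `b`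
conjugate (`b = g⁻¹ a g`), and conversely `b = c⁻¹ a c` is witnessed by `g = c`, `h = c⁻¹`. -/

/-- The relation `∼ₒ`. -/
def OConj {M : Type*} [Monoid M] (a b : M) : Prop :=
  ∃ g h : M, a * g = g * b ∧ b * h = h * a

section Monoid

variable {M : Type*} [Monoid M]

theorem oConj_refl (a : M) : OConj a a :=
  ⟨1, 1, by rw [mul_one, one_mul], by rw [mul_one, one_mul]⟩

theorem OConj.symm {a b : M} : OConj a b → OConj b a
  | ⟨g, h, hg, hh⟩ => ⟨h, g, hh, hg⟩

theorem OConj.trans {a b c : M} : OConj a b → OConj b c → OConj a c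
  | ⟨g, h, hg, hh⟩, ⟨g', h', hg', hh'⟩ =>
    ⟨g * g', h' * h, ((SemiconjBy.mul_left hg.symm hg'.symm).eq).symm,
      ((SemiconjBy.mul_left hh'.symm hh.symm).eq).symm⟩

theorem oConj_equivalence : Equivalence (OConj (M := M)) :=
  ⟨oConj_refl, OConj.symm, OConj.trans⟩

end Monoid

section Group

variable {G : Type*} [Group G]

theorem isConj_of_mul_eq_mul {a b g : G} (h : a * g = g * b) : IsConj a b :=
  isConj_iff.mpr ⟨g⁻¹, by rw [inv_inv, mul_assoc, h, inv_mul_cancel_left]⟩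

theorem IsConj.oConj {a b : G} (h : IsConj a b) : OConj a b := by
  obtain ⟨c, rfl⟩ := isConj_iff.mp h
  exact ⟨c⁻¹, c, by group, by group⟩

theorem oConj_iff_isConj {a b : G} : OConj a b ↔ IsConj a b :=
  ⟨fun ⟨_, _, hg, _⟩ => isConj_of_mul_eq_mul hg, IsConj.oConj⟩

end Group

/-- The relation `∼ₒ` (`a ∼ₒ b` iff `a * g = g * b` and `b * h = h * a` for
some `g, h`) is an equivalence relation on any monoid, and it coincides with
conjugacy on any group. -/
theorem sim_o_equivalence_and_group_conj (M : Type*) [Monoid M]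
    (G : Type*) [Group G] :
    Equivalence (fun a b : M => ∃ g h : M, a * g = g * b ∧ b * h = h * a) ∧
    (∀ a b : G, (∃ g h : G, a * g = g * b ∧ b * h = h * a) ↔ IsConj a b) :=
  ⟨oConj_equivalence, fun _ _ => oConj_iff_isConj⟩
end

section
/- For every partition of a countable set X, there exists a semigroup structure on X whose ∼_o-conjugacy classes are exactly the blocks of the partition. Concretely, indexing the blocks by elements j of a countable (finite cyclic or infinite) additive monoid and the block X_j elements as pairs (i,j), the operation (a,b)(c,d) := (1, b+d) is associative and two elements (a,b), (c,d) satisfy ∼_o iff b = d. -/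
/-- The multiplication `(a,b)(c,d) := (1, b+d)` on the disjoint union of the
blocks `X j` (indexed by a cancellative commutative additive monoid, e.g.
`ZMod κ` or `ℕ`), where `one j` is the distinguished element of block `X j`. -/
def sigmaMulO {J : Type*} [Add J] {X : J → Type*} (one : ∀ j, X j)
    (p q : Σ j, X j) : Σ j, X j :=
  ⟨p.1 + q.1, one _⟩

/-! A product lands on the distinguished element of the block of `p.1 + q.1`, so it is
determined by its block index: the semigroup is the additive monoid of indices in disguise,
and `∼ₒ` becomes conjugacy in a commutative cancellative monoid, i.e. equality. -/

section SigmaMulO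

variable {J : Type*} {X : J → Type*} (one : ∀ j, X j)

theorem sigmaMulO_eq_iff [Add J] {p q r s : Σ j, X j} :
    sigmaMulO one p q = sigmaMulO one r s ↔ p.1 + q.1 = r.1 + s.1 := by
  refine ⟨congrArg Sigma.fst, fun h => ?_⟩
  unfold sigmaMulO
  rw [h]

theorem sigmaMulO_assoc [AddSemigroup J] (p q r : Σ j, X j) :
    sigmaMulO one (sigmaMulO one p q) r = sigmaMulO one p (sigmaMulO one q r) :=
  (sigmaMulO_eq_iff one).2 (add_assoc p.1 q.1 r.1)

theorem sigmaMulO_conj_iff [AddCancelCommMonoid J] (p q : Σ j, X j) :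
    (∃ g h : Σ j, X j,
        sigmaMulO one p g = sigmaMulO one g q ∧
        sigmaMulO one q h = sigmaMulO one h p) ↔ p.1 = q.1 := by
  constructor
  · rintro ⟨g, -, hg, -⟩
    rw [sigmaMulO_eq_iff, add_comm g.1] at hg
    exact add_right_cancel hg
  · intro hpq
    refine ⟨p, p, (sigmaMulO_eq_iff one).2 ?_, (sigmaMulO_eq_iff one).2 ?_⟩ <;> rw [hpq]

end SigmaMulO

theorem sim_o_partition_covering_general (J : Type*) [AddCancelCommMonoid J]
    (X : J → Type*) (one : ∀ j, X j) :
    (∀ p q r : Σ j, X j,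
      sigmaMulO one (sigmaMulO one p q) r = sigmaMulO one p (sigmaMulO one q r)) ∧
    (∀ p q : Σ j, X j,
      (∃ g h : Σ j, X j,
          sigmaMulO one p g = sigmaMulO one g q ∧
          sigmaMulO one q h = sigmaMulO one h p) ↔ p.1 = q.1) :=
  ⟨sigmaMulO_assoc one, sigmaMulO_conj_iff one⟩

/-- For every partition of a countable set (given here as blocks `X j` indexed
by a countable cancellative commutative additive monoid `J`, each block being
nonempty with a distinguished element `one j`), the operation
`(a,b)(c,d) := (1, b+d)` is associative, and two elements are `∼ₒ`-conjugate
iff they lie in the same block.  Hence `∼ₒ` is partition covering for any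
countable set. -/
theorem sim_o_partition_covering (J : Type*) [AddCancelCommMonoid J]
    [Countable J] (X : J → Type*) (one : ∀ j, X j) :
    (∀ p q r : Σ j, X j,
      sigmaMulO one (sigmaMulO one p q) r = sigmaMulO one p (sigmaMulO one q r)) ∧
    (∀ p q : Σ j, X j,
      (∃ g h : Σ j, X j,
          sigmaMulO one p g = sigmaMulO one g q ∧
          sigmaMulO one q h = sigmaMulO one h p) ↔ p.1 = q.1) :=
  sim_o_partition_covering_general J X one
end

section
/- Let X be a finite set partitioned into blocks {X_j}, with X_0 a block of maximal size, and elements of X_j written as pairs (i,j) with 1 ≤ i ≤ |X_j|. The operation (a,b)(c,d) := (a,b) if b = d, and (a,0) if b ≠ d, is associative, and the resulting semigroup's ∼_p-classes are exactly the blocks: (a,b) ∼_p (c,d) iff b = d. -/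
/-! A product keeps the position of its left factor, and its block is the common block of the
factors if they share one and `0` otherwise. Associativity follows coordinatewise, and since the
block of `u * v` is symmetric in `u` and `v`, `∼ₚ` preserves blocks; conversely `p = p * q` and
`q = q * p` whenever `p` and `q` share a block. -/

/-- The multiplication `(a,b)(c,d) := (a,b)` if `b = d` and `(a,0)` if
`b ≠ d`, on the disjoint union of blocks `Fin (m j)` indexed by `j : J`
(with distinguished block `0` of maximal size, so that `(a,0)` makes sense). -/
def sigmaMulP {J : Type*} [DecidableEq J] [Zero J] {m : J → ℕ}
    (hm : ∀ j, m j ≤ m 0) (p q : Σ j, Fin (m j)) : Σ j, Fin (m j) :=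
  if p.1 = q.1 then p else ⟨0, Fin.castLE (hm p.1) p.2⟩

theorem Sigma.fin_ext {J : Type*} {m : J → ℕ} {p q : Σ j, Fin (m j)}
    (h₁ : p.1 = q.1) (h₂ : (p.2 : ℕ) = q.2) : p = q :=
  Sigma.ext h₁ ((Fin.heq_ext_iff (congrArg m h₁)).mpr h₂)

section

variable {J : Type*} [DecidableEq J] [Zero J] {m : J → ℕ} (hm : ∀ j, m j ≤ m 0)

theorem sigmaMulP_fst (p q : Σ j, Fin (m j)) :
    (sigmaMulP hm p q).1 = if p.1 = q.1 then p.1 else 0 := by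
  unfold sigmaMulP
  split_ifs <;> rfl

theorem sigmaMulP_snd_val (p q : Σ j, Fin (m j)) : ((sigmaMulP hm p q).2 : ℕ) = p.2 := by
  by_cases h : p.1 = q.1
  · rw [sigmaMulP, if_pos h]
  · rw [sigmaMulP, if_neg h, Fin.val_castLE]

theorem sigmaMulP_of_fst_eq {p q : Σ j, Fin (m j)} (h : p.1 = q.1) : sigmaMulP hm p q = p :=
  if_pos h

theorem sigmaMulP_assoc (p q r : Σ j, Fin (m j)) :
    sigmaMulP hm (sigmaMulP hm p q) r = sigmaMulP hm p (sigmaMulP hm q r) := by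
  refine Sigma.fin_ext ?_ (by simp only [sigmaMulP_snd_val])
  simp only [sigmaMulP_fst]
  split_ifs <;> simp_all

theorem sigmaMulP_fst_comm (p q : Σ j, Fin (m j)) :
    (sigmaMulP hm p q).1 = (sigmaMulP hm q p).1 := by
  simp only [sigmaMulP_fst]
  split_ifs <;> simp_all

theorem exists_sigmaMulP_swap_iff (p q : Σ j, Fin (m j)) :
    (∃ u v : Σ j, Fin (m j), p = sigmaMulP hm u v ∧ q = sigmaMulP hm v u) ↔ p.1 = q.1 := by
  constructor
  · rintro ⟨u, v, rfl, rfl⟩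
    exact sigmaMulP_fst_comm hm u v
  · intro h
    exact ⟨p, q, (sigmaMulP_of_fst_eq hm h).symm, (sigmaMulP_of_fst_eq hm h.symm).symm⟩

end

theorem sim_p_partition_covering_general (J : Type*) [DecidableEq J]
    [Zero J] (m : J → ℕ) (hm : ∀ j, m j ≤ m 0) :
    (∀ p q r : Σ j, Fin (m j),
      sigmaMulP hm (sigmaMulP hm p q) r = sigmaMulP hm p (sigmaMulP hm q r)) ∧
    (∀ p q : Σ j, Fin (m j),
      (∃ u v : Σ j, Fin (m j), p = sigmaMulP hm u v ∧ q = sigmaMulP hm v u) ↔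
        p.1 = q.1) :=
  ⟨sigmaMulP_assoc hm, exists_sigmaMulP_swap_iff hm⟩

/-- For a finite set partitioned into nonempty blocks `X_j = Fin (m j)` with
`X_0` of maximal size, the operation `(a,b)(c,d) := (a,b)` if `b = d` and
`(a,0)` otherwise is associative, and the `∼ₚ`-classes
(`p ∼ₚ q` iff `p = u*v` and `q = v*u` for some `u,v`)
are exactly the blocks. -/
theorem sim_p_partition_covering (J : Type*) [DecidableEq J] [Fintype J]
    [Zero J] (m : J → ℕ) (hm : ∀ j, m j ≤ m 0) (hpos : ∀ j, 0 < m j) :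
    (∀ p q r : Σ j, Fin (m j),
      sigmaMulP hm (sigmaMulP hm p q) r = sigmaMulP hm p (sigmaMulP hm q r)) ∧
    (∀ p q : Σ j, Fin (m j),
      (∃ u v : Σ j, Fin (m j), p = sigmaMulP hm u v ∧ q = sigmaMulP hm v u) ↔
        p.1 = q.1) :=
  sim_p_partition_covering_general J m hm
end

section
/- In the semigroup on a finite partitioned set X with operation (a,b)(c,d) := (a,b) if b = d and (a,0) if b ≠ d (where X_0 is a block of maximal size), every element is idempotent, and the trace conjugacy relation ∼_tr coincides with ∼_p: both relate (a,b) and (c,d) exactly when b = d. -/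
/-!
A product `u v` lies in the block of `u` if `u` and `v` share a block and in block `0` otherwise,
so `u v` and `v u` always share a block. Hence `∼ₚ` relates only elements of one block, and so does
`∼_tr`, which is contained in `∼ₚ` via `(u, v) = (h, g)`. Conversely, if `p` and `q` share a block
then `p q = p` and `q p = q`, so `(u, v) = (p, q)` witnesses `p ∼ₚ q` and `(g, h) = (q, p)`
witnesses `p ∼_tr q`.
-/

section Conjugacy

variable {α : Type*} (mul : α → α → α)

def PConj (p q : α) : Prop :=
  ∃ u v, p = mul u v ∧ q = mul v u

/-- `∼_tr` in a semigroup where every element is idempotent, so that `p^ω = p` and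
`p^(ω+1) = p p`. -/
def TrConj (p q : α) : Prop :=
  ∃ g h, mul (mul g h) g = g ∧ mul (mul h g) h = h ∧ mul h g = p ∧ mul g h = q ∧
    mul (mul g (mul p p)) h = mul q q

variable {mul}

theorem TrConj.pConj {p q : α} : TrConj mul p q → PConj mul p q := by
  rintro ⟨g, h, -, -, rfl, rfl, -⟩
  exact ⟨h, g, rfl, rfl⟩

end Conjugacy

section SigmaMulP

variable {J : Type*} [DecidableEq J] [Zero J] {m : J → ℕ} (hm : ∀ j, m j ≤ m 0)

theorem sigmaMulP_self (p : Σ j, Fin (m j)) : sigmaMulP hm p p = p :=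
  sigmaMulP_of_fst_eq hm rfl

theorem fst_sigmaMulP_comm (u v : Σ j, Fin (m j)) :
    (sigmaMulP hm u v).1 = (sigmaMulP hm v u).1 := by
  by_cases huv : u.1 = v.1
  · rw [sigmaMulP_of_fst_eq hm huv, sigmaMulP_of_fst_eq hm huv.symm, huv]
  · simp [sigmaMulP, huv, Ne.symm huv]

theorem pConj_sigmaMulP_iff {p q : Σ j, Fin (m j)} : PConj (sigmaMulP hm) p q ↔ p.1 = q.1 := by
  constructor
  · rintro ⟨u, v, rfl, rfl⟩
    exact fst_sigmaMulP_comm hm u v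
  · intro hpq
    exact ⟨p, q, (sigmaMulP_of_fst_eq hm hpq).symm, (sigmaMulP_of_fst_eq hm hpq.symm).symm⟩

theorem trConj_sigmaMulP_iff {p q : Σ j, Fin (m j)} : TrConj (sigmaMulP hm) p q ↔ p.1 = q.1 := by
  refine ⟨fun h => (pConj_sigmaMulP_iff hm).1 h.pConj, fun hpq => ?_⟩
  have hpq' : sigmaMulP hm p q = p := sigmaMulP_of_fst_eq hm hpq
  have hqp : sigmaMulP hm q p = q := sigmaMulP_of_fst_eq hm hpq.symm
  refine ⟨q, p, ?_, ?_, hpq', hqp, ?_⟩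
  · rw [hqp, sigmaMulP_self]
  · rw [hpq', sigmaMulP_self]
  · rw [sigmaMulP_self, hqp, hqp, sigmaMulP_self]

end SigmaMulP

theorem sim_tr_eq_sim_p_general (J : Type*) [DecidableEq J] [Zero J]
    (m : J → ℕ) (hm : ∀ j, m j ≤ m 0) :
    (∀ p : Σ j, Fin (m j), sigmaMulP hm p p = p) ∧
    (∀ p q : Σ j, Fin (m j),
      ((∃ g h : Σ j, Fin (m j),
          sigmaMulP hm (sigmaMulP hm g h) g = g ∧
          sigmaMulP hm (sigmaMulP hm h g) h = h ∧
          sigmaMulP hm h g = p ∧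
          sigmaMulP hm g h = q ∧
          sigmaMulP hm (sigmaMulP hm g (sigmaMulP hm p p)) h = sigmaMulP hm q q) ↔
        (∃ u v : Σ j, Fin (m j), p = sigmaMulP hm u v ∧ q = sigmaMulP hm v u)) ∧
      ((∃ u v : Σ j, Fin (m j), p = sigmaMulP hm u v ∧ q = sigmaMulP hm v u) ↔
        p.1 = q.1)) :=
  ⟨sigmaMulP_self hm, fun _ _ =>
    ⟨(trConj_sigmaMulP_iff hm).trans (pConj_sigmaMulP_iff hm).symm, pConj_sigmaMulP_iff hm⟩⟩

/-- In the semigroup on a finite partitioned set with operation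
`(a,b)(c,d) := (a,b)` if `b = d` and `(a,0)` otherwise, every element is
idempotent (so the idempotent power is `ω = 1`), and the trace conjugacy
relation `∼_tr` (there are mutually inverse `g, h` with `h*g = p^ω`,
`g*h = q^ω` and `g*p^(ω+1)*h = q^(ω+1)`) coincides with `∼ₚ`: both relate two
elements exactly when they lie in the same block. -/
theorem sim_tr_eq_sim_p (J : Type*) [DecidableEq J] [Fintype J] [Zero J]
    (m : J → ℕ) (hm : ∀ j, m j ≤ m 0) (hpos : ∀ j, 0 < m j) :
    (∀ p : Σ j, Fin (m j), sigmaMulP hm p p = p) ∧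
    (∀ p q : Σ j, Fin (m j),
      ((∃ g h : Σ j, Fin (m j),
          sigmaMulP hm (sigmaMulP hm g h) g = g ∧
          sigmaMulP hm (sigmaMulP hm h g) h = h ∧
          sigmaMulP hm h g = p ∧
          sigmaMulP hm g h = q ∧
          sigmaMulP hm (sigmaMulP hm g (sigmaMulP hm p p)) h = sigmaMulP hm q q) ↔
        (∃ u v : Σ j, Fin (m j), p = sigmaMulP hm u v ∧ q = sigmaMulP hm v u)) ∧
      ((∃ u v : Σ j, Fin (m j), p = sigmaMulP hm u v ∧ q = sigmaMulP hm v u) ↔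
        p.1 = q.1)) :=
  sim_tr_eq_sim_p_general J m hm
end

section
/- If S is an inverse semigroup of partial bijections on [n] generated (as an inverse semigroup) by a₁,...,a_k ∈ I_n, and S has a zero element 0, then for any edge (p,q) with p ≠ q of the transformation graph (i.e., p·a_i = q for some generator), the point q is not in the domain of 0, and q is connected to the sink vertex n+1 in the transformation graph. -/
/-!
A zero `z` of the inverse semigroup satisfies `z z⁻¹ = z`, so it is a partial identity; since
also `aᵢ z = z`, an edge `p ⬝ aᵢ = q` with `p ≠ q` forces `z p = z q`, which a partial identity
only allows when `q ∉ dom z`. For the second claim let `U` be the set of points not connected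
to the sink. Every generator maps `U` totally into `U`; as `U` is finite, it then permutes `U`,
so its inverse does too, and hence every element of the semigroup, `z` included, is defined on
all of `U`. Thus `q ∉ U`.
-/

/-- Membership in the inverse semigroup of partial bijections generated by
`a 1, ..., a k` (closure under composition and inversion). -/
inductive InvGen {n k : ℕ} (a : Fin k → PEquiv (Fin n) (Fin n)) :
    PEquiv (Fin n) (Fin n) → Prop
  | base (i : Fin k) : InvGen a (a i)
  | symm {s : PEquiv (Fin n) (Fin n)} : InvGen a s → InvGen a s.symm
  | mul {s t : PEquiv (Fin n) (Fin n)} :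
      InvGen a s → InvGen a t → InvGen a (s.trans t)

/-- The edge relation underlying the transformation graph `Γ(A, [n+1])`:
vertices are `Option (Fin n)` where `none` plays the role of the extra sink
vertex `n+1`; `some p` relates to `some q` if some generator maps `p` to `q`,
and `some p` relates to `none` if `p` is outside the domain of some
generator. -/
def transfRel {n k : ℕ} (a : Fin k → PEquiv (Fin n) (Fin n)) :
    Option (Fin n) → Option (Fin n) → Prop
  | some p, some q => ∃ i, a i p = some q
  | some p, none => ∃ i, a i p = none
  | none, _ => False

namespace PEquiv

variable {α : Type*}

theorem eq_of_trans_symm_eq_self {f : α ≃. α} (hf : f.trans f.symm = f) {x y : α}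
    (hxy : f x = some y) : x = y := by
  have hx : f.trans f.symm x = some x := (trans_eq_some _ _ _ _).2 ⟨y, hxy, (eq_some_iff f).2 hxy⟩
  rw [hf, hxy] at hx
  exact (Option.some_injective _ hx).symm

theorem apply_eq_none_of_trans_eq_self {z s : α ≃. α} (hz : z.trans z.symm = z)
    (hs : s.trans z = z) {p q : α} (hpq : p ≠ q) (hsp : s p = some q) : z q = none := by
  have hzpq : z p = z q :=
    calc z p = s.trans z p := by rw [hs]
      _ = z q := by simp only [PEquiv.trans, coe_mk, hsp, Option.bind_some]
  cases hzq : z q with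
  | none => rfl
  | some r =>
    rw [hzq] at hzpq
    exact absurd ((eq_of_trans_symm_eq_self hz hzpq).trans
      (eq_of_trans_symm_eq_self hz hzq).symm) hpq

def MapsTotally (f : α ≃. α) (U : Set α) : Prop :=
  ∀ x ∈ U, ∃ y ∈ U, f x = some y

theorem MapsTotally.trans {f g : α ≃. α} {U : Set α} (hf : f.MapsTotally U)
    (hg : g.MapsTotally U) : (f.trans g).MapsTotally U := by
  intro x hx
  obtain ⟨y, hy, hfx⟩ := hf x hx
  obtain ⟨w, hw, hgy⟩ := hg y hy
  exact ⟨w, hw, (trans_eq_some _ _ _ _).2 ⟨y, hfx, hgy⟩⟩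

theorem MapsTotally.symm {f : α ≃. α} {U : Set α} (hU : U.Finite) (hf : f.MapsTotally U) :
    f.symm.MapsTotally U := by
  have hg : ∀ x ∈ U, f x = some ((f x).getD x) := fun x hx => by
    obtain ⟨y, -, hfx⟩ := hf x hx
    rw [hfx, Option.getD_some]
  have hmaps : Set.MapsTo (fun x => (f x).getD x) U U := fun x hx => by
    obtain ⟨y, hy, hfx⟩ := hf x hx
    simpa only [hfx, Option.getD_some] using hy
  have hinj : Set.InjOn (fun x => (f x).getD x) U := fun x₁ hx₁ x₂ hx₂ h =>
    f.inj (hg x₁ hx₁) (by simp only at h; rw [h]; exact hg x₂ hx₂)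
  intro x hx
  obtain ⟨t, ht, rfl⟩ := ((hU.injOn_iff_bijOn_of_mapsTo hmaps).1 hinj).surjOn hx
  exact ⟨t, ht, (eq_some_iff f).2 (hg t ht)⟩

end PEquiv

theorem InvGen.mapsTotally {n k : ℕ} {a : Fin k → PEquiv (Fin n) (Fin n)}
    {U : Set (Fin n)} (ha : ∀ i, (a i).MapsTotally U) {s : PEquiv (Fin n) (Fin n)}
    (hs : InvGen a s) : s.MapsTotally U := by
  induction hs with
  | base i => exact ha i
  | symm _ ih => exact ih.symm U.toFinite
  | mul _ _ ihs iht => exact ihs.trans iht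

theorem mapsTotally_not_reachable_sink {n k : ℕ} (a : Fin k → PEquiv (Fin n) (Fin n))
    (i : Fin k) :
    (a i).MapsTotally {x | ¬ (SimpleGraph.fromRel (transfRel a)).Reachable (some x) none} := by
  intro x hx
  cases hax : a i x with
  | none =>
    refine absurd (SimpleGraph.Adj.reachable ?_) hx
    exact (SimpleGraph.fromRel_adj _ _ _).2 ⟨Option.some_ne_none x, Or.inl ⟨i, hax⟩⟩
  | some y =>
    refine ⟨y, fun hy => hx ?_, rfl⟩
    by_cases hxy : x = y
    · exact hxy ▸ hy
    · refine (SimpleGraph.Adj.reachable ?_).trans hy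
      exact (SimpleGraph.fromRel_adj _ _ _).2 ⟨by simpa using hxy, Or.inl ⟨i, hax⟩⟩

/-- If the inverse semigroup generated by `a 1, ..., a k` has a zero element
`z`, then for any edge `(p, q)` of the transformation graph with `p ≠ q`
coming from a generator (`p ⬝ aᵢ = q`), the point `q` is not in the domain of
`z`, and `q` is connected to the sink vertex `n+1` in the transformation
graph. -/
theorem zero_elt_edge_connected_to_sink (n k : ℕ)
    (a : Fin k → PEquiv (Fin n) (Fin n)) (z : PEquiv (Fin n) (Fin n))
    (hzmem : InvGen a z)
    (hz : ∀ s : PEquiv (Fin n) (Fin n), InvGen a s →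
      s.trans z = z ∧ z.trans s = z) :
    ∀ p q : Fin n, p ≠ q → (∃ i, a i p = some q) →
      z q = none ∧
      (SimpleGraph.fromRel (transfRel a)).Reachable (some q) none := by
  rintro p q hpq ⟨i, hi⟩
  have hzq : z q = none := PEquiv.apply_eq_none_of_trans_eq_self (hz _ hzmem.symm).2
    (hz _ (InvGen.base i)).1 hpq hi
  refine ⟨hzq, by_contra fun hq => ?_⟩
  obtain ⟨y, -, hy⟩ := hzmem.mapsTotally (mapsTotally_not_reachable_sink a) q hq
  exact Option.some_ne_none y (hy.symm.trans hzq)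
end

section
/- In a semigroup of partial bijections on a finite set, any right zero element is also a left zero element. -/
/-!
A right zero `z` satisfies `z ∘ z = z`, and an idempotent partial bijection is
the identity on its domain. If `a ∘ z = z`, then `a` maps every point of the domain of `z` to
a point that `z` sends back to it, hence (as `z` fixes its domain) to itself; so `z` followed
by `a` is again `z`.
-/

namespace PEquiv

variable {α : Type*} {z : α ≃. α}

theorem eq_of_apply_eq_some_of_trans_self (hz : z.trans z = z) {x y : α} (h : z x = some y) :
    y = x := by
  obtain ⟨b, hxb, hby⟩ := (trans_eq_some z z x y).mp (by rw [hz]; exact h)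
  obtain rfl : b = y := Option.some_injective _ (hxb.symm.trans h)
  exact z.inj hby h

theorem trans_eq_self_of_trans_eq_self (hz : z.trans z = z) {a : α ≃. α} (ha : a.trans z = z) :
    z.trans a = z := by
  ext x : 1
  cases hx : z x with
  | none => simp [PEquiv.trans, hx]
  | some y =>
    obtain rfl := eq_of_apply_eq_some_of_trans_self hz hx
    obtain ⟨b, hab, hbz⟩ := (trans_eq_some a z y y).mp (by rw [ha]; exact hx)
    obtain rfl := eq_of_apply_eq_some_of_trans_self hz hbz
    simp [PEquiv.trans, hx, hab]

end PEquiv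

theorem right_zero_is_left_zero_general (n : ℕ) (S : Set (PEquiv (Fin n) (Fin n)))
    (z : PEquiv (Fin n) (Fin n)) (hz : z ∈ S)
    (hrz : ∀ a ∈ S, a.trans z = z) :
    ∀ a ∈ S, z.trans a = z := fun a ha =>
  PEquiv.trans_eq_self_of_trans_eq_self (hrz z hz) (hrz a ha)

/-- In a semigroup of partial bijections on a finite set (a subset `S` of
`I_n` closed under composition), any right zero element is also a left zero
element. -/
theorem right_zero_is_left_zero (n : ℕ) (S : Set (PEquiv (Fin n) (Fin n)))
    (hS : ∀ a ∈ S, ∀ b ∈ S, a.trans b ∈ S)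
    (z : PEquiv (Fin n) (Fin n)) (hz : z ∈ S)
    (hrz : ∀ a ∈ S, a.trans z = z) :
    ∀ a ∈ S, z.trans a = z :=
  right_zero_is_left_zero_general n S z hz hrz
end

section
/- If a directed graph G contains a cycle (and no self-loops), then in the partial bijection semigroup generated by the edge maps a_{(u,v)}, there is a non-central idempotent, and the semigroup is not R-trivial. -/
/-!
Going once around a cycle `v → w → ⋯ → v` gives the idempotent `e = a_{(v,v)}`, the identity
on `{v}`. With `s = a_{(v,w)}` we get `e s = s` but `s e` is the empty map since `w ≠ v`, so `e` is not
central; and `e s = s`, `s a_{(w,v)} = e` show that `e` and `s` generate the same right ideal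
although they differ.
-/

/-- Membership in the partial bijection semigroup generated by the edge maps
`a_{(u,v)} = PEquiv.single u v` (domain `{u}`, sending `u` to `v`) of a
directed graph with edge relation `E`. -/
inductive EdgeGen {V : Type*} [DecidableEq V] (E : V → V → Prop) :
    PEquiv V V → Prop
  | single {u v : V} : E u v → EdgeGen E (PEquiv.single u v)
  | mul {s t : PEquiv V V} : EdgeGen E s → EdgeGen E t → EdgeGen E (s.trans t)

namespace PEquiv

variable {α β : Type*} [DecidableEq α] [DecidableEq β]

theorem single_right_injective (a : α) : Function.Injective (single a : β → α ≃. β) :=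
  fun b c h => Option.some_injective _ <| by
    rw [← single_apply a b, ← single_apply a c, h]

theorem single_ne_bot (a : α) (b : β) : single a b ≠ ⊥ := fun h => by
  simpa [single_apply] using congrArg (· a) h

end PEquiv

theorem Relation.TransGen.exists_ne_of_self {α : Type*} {r : α → α → Prop}
    (hirr : ∀ a, ¬ r a a) {a : α} (h : Relation.TransGen r a a) :
    ∃ b, b ≠ a ∧ r a b ∧ Relation.TransGen r b a := by
  obtain ⟨b, hab, hba⟩ := Relation.TransGen.head'_iff.mp h
  have hne : b ≠ a := fun hb => hirr a (hb ▸ hab)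
  rcases hba.cases_head with hb | ⟨c, hbc, hca⟩
  · exact absurd hb hne
  · exact ⟨b, hne, hab, .head' hbc hca⟩

theorem EdgeGen.single_of_transGen {V : Type*} [DecidableEq V] {E : V → V → Prop}
    {a b : V} (h : Relation.TransGen E a b) : EdgeGen E (PEquiv.single a b) := by
  induction h with
  | single h => exact .single h
  | @tail b c _ h ih =>
    rw [← PEquiv.single_trans_single a b c]
    exact .mul ih (.single h)

theorem cycle_noncentral_idem_not_rtrivial_general (V : Type*)
    [DecidableEq V] (E : V → V → Prop) (hloop : ∀ v : V, ¬ E v v)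
    (hcyc : ∃ v : V, Relation.TransGen E v v) :
    (∃ e : PEquiv V V, EdgeGen E e ∧ e.trans e = e ∧
      ∃ s : PEquiv V V, EdgeGen E s ∧ e.trans s ≠ s.trans e) ∧
    ¬ (∀ s t : PEquiv V V, EdgeGen E s → EdgeGen E t →
        ((s = t ∨ ∃ x, EdgeGen E x ∧ s.trans x = t) ∧
         (t = s ∨ ∃ x, EdgeGen E x ∧ t.trans x = s)) → s = t) := by
  obtain ⟨v, hv⟩ := hcyc
  obtain ⟨w, hwne, hvw, hwv⟩ := hv.exists_ne_of_self hloop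
  have he : EdgeGen E (PEquiv.single v v) := .single_of_transGen hv
  have hs : EdgeGen E (PEquiv.single v w) := .single hvw
  have hes : (PEquiv.single v v).trans (PEquiv.single v w) = PEquiv.single v w :=
    PEquiv.single_trans_single v v w
  have hse : (PEquiv.single v w).trans (PEquiv.single v v) = ⊥ :=
    PEquiv.single_trans_single_of_ne hwne v v
  refine ⟨⟨_, he, PEquiv.single_trans_single v v v, _, hs, ?_⟩, fun hR => ?_⟩
  · rw [hes, hse]
    exact PEquiv.single_ne_bot v w
  · have hsw : (PEquiv.single v w).trans (PEquiv.single w v) = PEquiv.single v v :=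
      PEquiv.single_trans_single v w v
    exact hwne.symm <| PEquiv.single_right_injective v <|
      hR _ _ he hs ⟨.inr ⟨_, hs, hes⟩, .inr ⟨_, .single_of_transGen hwv, hsw⟩⟩

/-- If a finite directed graph without self-loops contains a cycle, then the
partial bijection semigroup generated by the edge maps has a non-central
idempotent and is not `R`-trivial. -/
theorem cycle_noncentral_idem_not_rtrivial (V : Type*) [Fintype V]
    [DecidableEq V] (E : V → V → Prop) (hloop : ∀ v : V, ¬ E v v)
    (hcyc : ∃ v : V, Relation.TransGen E v v) :
    (∃ e : PEquiv V V, EdgeGen E e ∧ e.trans e = e ∧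
      ∃ s : PEquiv V V, EdgeGen E s ∧ e.trans s ≠ s.trans e) ∧
    ¬ (∀ s t : PEquiv V V, EdgeGen E s → EdgeGen E t →
        ((s = t ∨ ∃ x, EdgeGen E x ∧ s.trans x = t) ∧
         (t = s ∨ ∃ x, EdgeGen E x ∧ t.trans x = s)) → s = t) :=
  cycle_noncentral_idem_not_rtrivial_general V E hloop hcyc
end

section
/- Let a, b ∈ I_n with a = uv and b = vu for some u, v ∈ I_n. Then for every k, the map sending a cycle (x₁,...,x_k) of a to (x₁u,...,x_ku) is a well-defined injection from the k-cycles of a to the k-cycles of b; consequently a and b have the same number of cycles of each length. -/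
/-!
A `k`-cycle `x` of `u.trans v` passes through `u` at every step, so `y i := u (x i)` is defined;
`v` then sends `y i` to `x (i + 1)`, which `u` sends to `y (i + 1)`, so `y` is a `k`-cycle of
`v.trans u`, and `x ↦ y` is injective because `u` is. Exchanging `u` and `v` gives an injection
back, and both sets of cycles are finite.
-/

/-- `x : ZMod k → Fin n` is a cycle of length `k` of the partial bijection
`s`: its points are distinct and `s` maps each point to the next one
(cyclically). -/
def IsCycleOf {n : ℕ} (s : PEquiv (Fin n) (Fin n)) {k : ℕ}
    (x : ZMod k → Fin n) : Prop :=
  Function.Injective x ∧ ∀ i : ZMod k, s (x i) = some (x (i + 1))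

instance IsCycleOf.finite {n k : ℕ} (s : PEquiv (Fin n) (Fin n)) :
    Finite {x : ZMod k → Fin n // IsCycleOf s x} := by
  rcases finite_or_infinite (ZMod k) with _ | _
  · infer_instance
  · -- only for `k = 0`, where `ZMod 0 = ℤ` cannot inject into `Fin n`
    have : IsEmpty {x : ZMod k → Fin n // IsCycleOf s x} :=
      ⟨fun x => not_injective_infinite_finite x.1 x.2.1⟩
    infer_instance

lemma IsCycleOf.exists_trans_comm {n k : ℕ} {u v : PEquiv (Fin n) (Fin n)}
    {x : ZMod k → Fin n} (hx : IsCycleOf (u.trans v) x) :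
    ∃ y : {y : ZMod k → Fin n // IsCycleOf (v.trans u) y}, ∀ i, u (x i) = some (y.1 i) := by
  choose y hu hv using fun i => (PEquiv.trans_eq_some u v (x i) (x (i + 1))).1 (hx.2 i)
  have hy_inj : Function.Injective y := fun i j hij =>
    hx.1 (u.inj (hu i) (hij ▸ hu j))
  exact ⟨⟨y, hy_inj, fun i => (PEquiv.trans_eq_some v u _ _).2 ⟨x (i + 1), hv i, hu (i + 1)⟩⟩, hu⟩

lemma exists_injective_cycle_map_trans_comm {n k : ℕ} (u v : PEquiv (Fin n) (Fin n)) :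
    ∃ F : {x : ZMod k → Fin n // IsCycleOf (u.trans v) x} →
          {y : ZMod k → Fin n // IsCycleOf (v.trans u) y},
      (∀ x i, u (x.1 i) = some ((F x).1 i)) ∧ Function.Injective F := by
  choose F hF using fun x : {x : ZMod k → Fin n // IsCycleOf (u.trans v) x} =>
    x.2.exists_trans_comm
  refine ⟨F, hF, fun x x' h => Subtype.ext (funext fun i => ?_)⟩
  exact u.inj (hF x i) (h ▸ hF x' i)

/-- If `a = u * v` and `b = v * u` in `I_n`, then for every `k` the map
sending a `k`-cycle `(x₁, …, x_k)` of `a` to `(x₁u, …, x_ku)` is a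
well-defined injection from the `k`-cycles of `a` to the `k`-cycles of `b`;
consequently `a` and `b` have the same number of cycles of each length. -/
theorem cycles_of_uv_vs_vu (n k : ℕ) (u v : PEquiv (Fin n) (Fin n)) :
    ∃ F : {x : ZMod k → Fin n // IsCycleOf (u.trans v) x} →
          {y : ZMod k → Fin n // IsCycleOf (v.trans u) y},
      (∀ x i, u (x.1 i) = some ((F x).1 i)) ∧ Function.Injective F ∧
      Nat.card {x : ZMod k → Fin n // IsCycleOf (u.trans v) x} =
        Nat.card {y : ZMod k → Fin n // IsCycleOf (v.trans u) y} := by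
  obtain ⟨F, hF, hF_inj⟩ := exists_injective_cycle_map_trans_comm (k := k) u v
  obtain ⟨G, -, hG_inj⟩ := exists_injective_cycle_map_trans_comm (k := k) v u
  exact ⟨F, hF, hF_inj, le_antisymm (Nat.card_le_card_of_injective F hF_inj)
    (Nat.card_le_card_of_injective G hG_inj)⟩
end

section
/- Let a, b ∈ I_n with a = uv and b = vu. Then for every chain [x₁,...,x_k] of a with k > 1, either x_k ∉ dom(u), or the points x₁u, ..., x_ku begin a chain of b of length at least k−1; in particular each chain of a of length k > 1 maps under u to a chain of b of length at least k−1. -/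
/-- `x : Fin k → Fin n` is a chain of length `k` of the partial bijection
`s`: its points are distinct, `s` maps each point to the next one, and the
last point is outside the domain of `s`. -/
def IsChainOf {n : ℕ} (s : PEquiv (Fin n) (Fin n)) {k : ℕ}
    (x : Fin k → Fin n) : Prop :=
  Function.Injective x ∧
  (∀ i : Fin k, ∀ h : i.val + 1 < k, s (x i) = some (x ⟨i.val + 1, h⟩)) ∧
  ∀ i : Fin k, i.val + 1 = k → s (x i) = none

/-! Conjugating `u.trans v` by `u` gives `v.trans u`: a step `a ↦ b` of `uv` becomes the step
`au ↦ bu` of `vu` whenever both points lie in the domain of `u`. Every point of a chain of `uv`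
except the last lies in the domain of `u`, so either the last one does not, or `u` carries the
whole chain injectively onto consecutive points of `vu`. -/

namespace PEquiv

variable {α β γ : Type*}

theorem isSome_of_trans_eq_some {f : α ≃. β} {g : β ≃. γ} {a : α} {c : γ}
    (h : f.trans g a = some c) : (f a).isSome := by
  obtain ⟨b, hb, -⟩ := (trans_eq_some f g a c).mp h
  simp [hb]

theorem trans_swap_eq_some {u : α ≃. β} {v : β ≃. α} {a b : α} {a' b' : β}
    (ha : u a = some a') (hb : u b = some b') (h : u.trans v a = some b) :
    v.trans u a' = some b' := by
  obtain ⟨w, hw, hwb⟩ := (trans_eq_some u v a b).mp h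
  have hwa : w = a' := Option.some_injective _ (hw.symm.trans ha)
  exact (trans_eq_some v u a' b').mpr ⟨b, hwa ▸ hwb, hb⟩

end PEquiv

theorem chains_of_uv_vs_vu_general (n k : ℕ)
    (u v : PEquiv (Fin n) (Fin n)) (x : Fin k → Fin n)
    (hx : IsChainOf (u.trans v) x) :
    (∃ i : Fin k, i.val + 1 = k ∧ u (x i) = none) ∨
    ∃ y : Fin k → Fin n, Function.Injective y ∧
      (∀ i : Fin k, u (x i) = some (y i)) ∧
      ∀ i : Fin k, ∀ h : i.val + 1 < k,
        (v.trans u) (y i) = some (y ⟨i.val + 1, h⟩) := by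
  obtain ⟨hinj, hstep, -⟩ := hx
  by_cases hdom : ∀ i, (u (x i)).isSome
  · set y : Fin k → Fin n := fun i => (u (x i)).get (hdom i)
    have hy : ∀ i, u (x i) = some (y i) := fun i => by simp [y]
    exact .inr ⟨y, fun i j hij => hinj (u.inj (hy i) (hij ▸ hy j)), hy,
      fun i h => PEquiv.trans_swap_eq_some (hy i) (hy _) (hstep i h)⟩
  · push Not at hdom
    obtain ⟨i, hi⟩ := hdom
    refine .inl ⟨i, ?_, by simpa using hi⟩
    by_contra hlast
    exact hi (PEquiv.isSome_of_trans_eq_some (hstep i (by omega)))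

/-- Let `a = u * v` and `b = v * u` in `I_n`.  For every chain
`[x₁, …, x_k]` of `a` with `k > 1`, either `x_k ∉ dom u`, or all points
`x₁u, …, x_ku` are defined and form `b`-consecutive distinct points, i.e.
they begin a chain of `b` of length at least `k - 1`. -/
theorem chains_of_uv_vs_vu (n k : ℕ) (hk : 1 < k)
    (u v : PEquiv (Fin n) (Fin n)) (x : Fin k → Fin n)
    (hx : IsChainOf (u.trans v) x) :
    (∃ i : Fin k, i.val + 1 = k ∧ u (x i) = none) ∨
    ∃ y : Fin k → Fin n, Function.Injective y ∧
      (∀ i : Fin k, u (x i) = some (y i)) ∧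
      ∀ i : Fin k, ∀ h : i.val + 1 < k,
        (v.trans u) (y i) = some (y ⟨i.val + 1, h⟩) :=
  chains_of_uv_vs_vu_general n k u v x hx
end

section
/- Let S be an inverse subsemigroup of I_n, h ∈ I_n, and construct ā elements on A = [n] × [n+1] by (x,y)·s̄ = (x·s, y), together with a, b ∈ I_A defined by (x,y)a = (x,y+1) when y ≤ x and x ∈ dom(h⁻¹), and (x,y)b = (x,y+1) when y ≤ xh and x ∈ dom(h). If h ∈ S, then h̄ a h̄⁻¹ = b on dom(b)-appropriate points and h̄⁻¹ b h̄ = a; i.e., a is ∼_i-conjugate to b in the inverse semigroup generated by {s̄ : s ∈ S} ∪ {a, b}. -/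
/-!
Conjugating by the lift `h̄` only relabels the first coordinate through `h`, so it carries a
map acting fibrewise in the second coordinate, with fibre map `c x` over `x`, to the fibrewise
map with fibre map `c (x h)` over `x`. The defining conditions of `a` and `b` correspond exactly
under this relabelling, so `h̄` itself witnesses `a ∼ᵢ b`.
-/

/-- Membership in the inverse semigroup generated by a set `T` of partial
bijections (closure under composition and inversion). -/
inductive IGen {α : Type*} (T : Set (PEquiv α α)) : PEquiv α α → Prop
  | base {x : PEquiv α α} : x ∈ T → IGen T x
  | symm {x : PEquiv α α} : IGen T x → IGen T x.symm
  | mul {x y : PEquiv α α} : IGen T x → IGen T y → IGen T (x.trans y)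

namespace PEquiv

variable {α β γ : Type*}

theorem trans_apply (f : PEquiv α β) (g : PEquiv β γ) (a : α) : f.trans g a = (f a).bind g :=
  rfl

theorem symm_apply_of_lift {s : PEquiv α γ} {L : PEquiv (α × β) (γ × β)}
    (hL : ∀ p, L p = (s p.1).map fun z => (z, p.2)) (p : γ × β) :
    L.symm p = (s.symm p.1).map fun z => (z, p.2) := by
  refine Option.ext fun q => ?_
  rw [eq_some_iff, hL, Option.map_eq_some_iff, Option.map_eq_some_iff]
  constructor
  · rintro ⟨z, hz, rfl⟩
    exact ⟨q.1, (eq_some_iff s).2 hz, rfl⟩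
  · rintro ⟨w, hw, rfl⟩
    exact ⟨p.1, (eq_some_iff s).1 hw, rfl⟩

theorem trans_trans_symm_apply_of_lift {s : PEquiv α γ} {L : PEquiv (α × β) (γ × β)}
    (hL : ∀ p, L p = (s p.1).map fun z => (z, p.2)) {C : PEquiv (γ × β) (γ × β)}
    {c : γ → β → Option β} (hC : ∀ p, C p = (c p.1 p.2).map fun y => (p.1, y))
    (p : α × β) :
    ((L.trans C).trans L.symm) p = (s p.1).bind fun z => (c z p.2).map fun y => (p.1, y) := by
  simp only [trans_apply, hL, hC, symm_apply_of_lift hL]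
  cases hz : s p.1 with
  | none => rfl
  | some z =>
    have hz' : s.symm z = some p.1 := (eq_some_iff s).2 hz
    simp only [Option.map_some, Option.bind_some, Option.bind_map, Function.comp_def, hz']
    rw [Option.map_eq_bind, Function.comp_def]

theorem symm_trans_trans_apply_of_lift {s : PEquiv α α} {L : PEquiv (α × β) (α × β)}
    (hL : ∀ p, L p = (s p.1).map fun z => (z, p.2)) {C : PEquiv (α × β) (α × β)}
    {c : α → β → Option β} (hC : ∀ p, C p = (c p.1 p.2).map fun y => (p.1, y))
    (p : α × β) :
    ((L.symm.trans C).trans L) p =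
      (s.symm p.1).bind fun z => (c z p.2).map fun y => (p.1, y) := by
  simpa using trans_trans_symm_apply_of_lift (symm_apply_of_lift hL) hC p

end PEquiv

section ConditionalShift

variable {α β : Type*} {h : PEquiv α α} {L A B : PEquiv (α × β) (α × β)}
  {P : α → β → Prop} [∀ x y, Decidable (P x y)] {f : β → β}

theorem lift_trans_trans_symm_eq (hL : ∀ p, L p = (h p.1).map fun z => (z, p.2))
    (hA : ∀ p, A p = if P p.1 p.2 ∧ (h.symm p.1).isSome then some (p.1, f p.2) else none)
    (hB : ∀ p, B p = (h p.1).bind fun z => if P z p.2 then some (p.1, f p.2) else none) :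
    (L.trans A).trans L.symm = B := by
  have hA' : ∀ p, A p = (if P p.1 p.2 ∧ (h.symm p.1).isSome then some (f p.2)
      else none).map fun y => (p.1, y) := fun p => by
    rw [hA]; split_ifs <;> rfl
  ext1 p
  rw [PEquiv.trans_trans_symm_apply_of_lift hL
    (c := fun x y => if P x y ∧ (h.symm x).isSome then some (f y) else none) hA', hB]
  cases hz : h p.1 with
  | none => rfl
  | some z => simp [(PEquiv.eq_some_iff h).2 hz]

theorem lift_symm_trans_trans_eq (hL : ∀ p, L p = (h p.1).map fun z => (z, p.2))
    (hA : ∀ p, A p = if P p.1 p.2 ∧ (h.symm p.1).isSome then some (p.1, f p.2) else none)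
    (hB : ∀ p, B p = (h p.1).bind fun z => if P z p.2 then some (p.1, f p.2) else none) :
    (L.symm.trans B).trans L = A := by
  have hB' : ∀ p, B p = ((h p.1).bind fun z => if P z p.2 then some (f p.2)
      else none).map fun y => (p.1, y) := fun p => by
    rw [hB]; cases h p.1
    · rfl
    · simp only [Option.bind_some]; split_ifs <;> rfl
  ext1 p
  rw [PEquiv.symm_trans_trans_apply_of_lift hL
    (c := fun x y => (h x).bind fun z => if P z y then some (f y) else none) hB', hA]
  cases hz : h.symm p.1 with
  | none => simp
  | some z => simp [(PEquiv.eq_some_iff h).1 hz]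

end ConditionalShift

theorem mem_implies_i_conjugate_general (n : ℕ) (S : Set (PEquiv (Fin n) (Fin n)))
    (h : PEquiv (Fin n) (Fin n)) (hh : h ∈ S)
    (bar : PEquiv (Fin n) (Fin n) →
      PEquiv (Fin n × Fin (n + 1)) (Fin n × Fin (n + 1)))
    (hbar : ∀ s p, bar s p = (s p.1).map fun z => (z, p.2))
    (A B : PEquiv (Fin n × Fin (n + 1)) (Fin n × Fin (n + 1)))
    (hA : ∀ p, A p =
      if p.2.val ≤ p.1.val ∧ (h.symm p.1).isSome then some (p.1, p.2 + 1)
      else none)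
    (hB : ∀ p, B p = (h p.1).bind fun z =>
      if p.2.val ≤ z.val then some (p.1, p.2 + 1) else none) :
    ((bar h).trans A).trans (bar h).symm = B ∧
    ((bar h).symm.trans B).trans (bar h) = A ∧
    ∃ t, IGen ({q | ∃ s ∈ S, q = bar s} ∪ {A, B}) t ∧
      (t.trans A).trans t.symm = B ∧ (t.symm.trans B).trans t = A := by
  have conj := lift_trans_trans_symm_eq (P := fun x y => y.val ≤ x.val)
    (f := (· + 1)) (hbar h) hA hB
  have conj_symm := lift_symm_trans_trans_eq (P := fun x y => y.val ≤ x.val)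
    (f := (· + 1)) (hbar h) hA hB
  exact ⟨conj, conj_symm, bar h, IGen.base (Or.inl ⟨h, hh, rfl⟩), conj, conj_symm⟩

/-- Let `S` be an inverse subsemigroup of `I_n` and `h ∈ I_n`.  On
`A = [n] × [n+1]` let `bar s` be the lift `(x, y) ↦ (x s, y)` of `s`, and let
`a, b ∈ I_A` be given by `(x, y) a = (x, y + 1)` when `y ≤ x` and
`x ∈ dom h⁻¹`, and `(x, y) b = (x, y + 1)` when `y ≤ x h` and `x ∈ dom h`.
If `h ∈ S`, then `h̄ a h̄⁻¹ = b` and `h̄⁻¹ b h̄ = a`; in particular `a ∼ᵢ b`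
in the inverse semigroup generated by `{s̄ : s ∈ S} ∪ {a, b}`. -/
theorem mem_implies_i_conjugate (n : ℕ) (S : Set (PEquiv (Fin n) (Fin n)))
    (hSmul : ∀ s ∈ S, ∀ t ∈ S, s.trans t ∈ S)
    (hSsymm : ∀ s ∈ S, s.symm ∈ S)
    (h : PEquiv (Fin n) (Fin n)) (hh : h ∈ S)
    (bar : PEquiv (Fin n) (Fin n) →
      PEquiv (Fin n × Fin (n + 1)) (Fin n × Fin (n + 1)))
    (hbar : ∀ s p, bar s p = (s p.1).map fun z => (z, p.2))
    (A B : PEquiv (Fin n × Fin (n + 1)) (Fin n × Fin (n + 1)))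
    (hA : ∀ p, A p =
      if p.2.val ≤ p.1.val ∧ (h.symm p.1).isSome then some (p.1, p.2 + 1)
      else none)
    (hB : ∀ p, B p = (h p.1).bind fun z =>
      if p.2.val ≤ z.val then some (p.1, p.2 + 1) else none) :
    ((bar h).trans A).trans (bar h).symm = B ∧
    ((bar h).symm.trans B).trans (bar h) = A ∧
    ∃ t, IGen ({q | ∃ s ∈ S, q = bar s} ∪ {A, B}) t ∧
      (t.trans A).trans t.symm = B ∧ (t.symm.trans B).trans t = A :=
  mem_implies_i_conjugate_general n S h hh bar hbar A B hA hB
end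

section
/- With the construction on A = [n] × [n+1] as above, if g ∈ I_n satisfies ḡ a ḡ⁻¹ = b and ḡ⁻¹ b ḡ = a (where ḡ acts on the first coordinate), then g agrees with h on dom(h): for every x ∈ dom(h), x·g = x·h. -/
/-!
Conjugating by `ḡ` moves the fibre over `x` onto the fibre over `x g` without touching the
second coordinate. Comparing `ḡ a ḡ⁻¹ = b` on the fibre over `x ∈ dom h` therefore gives, for
every `y ≤ n`, that `y ≤ x h` holds iff `y ≤ x g` and `x g ∈ dom h⁻¹`. Taking `y = 0` shows
`x ∈ dom g`, and taking `y = x h` and `y = x g` gives the two inequalities between `x h` and `x g`.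
-/

lemma eq_of_forall_le_iff_le_and {α : Type*} [PartialOrder α] {a b : α}
    {P : Prop} (H : ∀ c, c ≤ a ∧ P ↔ c ≤ b) : a = b := by
  have hP : P := ((H b).mpr le_rfl).2
  exact eq_of_forall_le_iff fun c => by rw [← H c, and_iff_left hP]

lemma iff_of_ite_some_eq_ite_some {α : Type*} {c d : Prop} [Decidable c] [Decidable d] {a : α}
    (H : (if c then some a else none) = if d then some a else none) : c ↔ d := by
  by_cases hc : c <;> by_cases hd : d <;> simp_all

namespace PEquiv

section FibreLift

variable {α β : Type*} {g : α ≃. α} {gbar : (α × β) ≃. (α × β)}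
  (hgbar : ∀ p, gbar p = (g p.1).map fun z => (z, p.2))
include hgbar

lemma symm_apply_of_lift_s19 {x w : α} (hw : g x = some w) (y : β) :
    gbar.symm (w, y) = some (x, y) :=
  gbar.eq_some_iff.mpr (by rw [hgbar, hw]; rfl)

lemma conj_lift_apply_of_eq_none {x : α} (hx : g x = none) (A : (α × β) ≃. (α × β)) (y : β) :
    (gbar.trans A).trans gbar.symm (x, y) = none := by
  simp [PEquiv.trans, hgbar, hx]

lemma conj_lift_apply_of_eq_some {x w : α} (hw : g x = some w) {A : (α × β) ≃. (α × β)}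
    {y y' : β} {c : Prop} [Decidable c] (hA : A (w, y) = if c then some (w, y') else none) :
    (gbar.trans A).trans gbar.symm (x, y) = if c then some (x, y') else none := by
  split_ifs at hA ⊢ <;> simp [PEquiv.trans, hgbar, hw, hA, symm_apply_of_lift_s19 hgbar hw]

end FibreLift

end PEquiv

theorem conjugator_agrees_with_h_general (n : ℕ) (h g : PEquiv (Fin n) (Fin n))
    (gbar : PEquiv (Fin n × Fin (n + 1)) (Fin n × Fin (n + 1)))
    (hgbar : ∀ p, gbar p = (g p.1).map fun z => (z, p.2))
    (A B : PEquiv (Fin n × Fin (n + 1)) (Fin n × Fin (n + 1)))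
    (hA : ∀ p, A p =
      if p.2.val ≤ p.1.val ∧ (h.symm p.1).isSome then some (p.1, p.2 + 1)
      else none)
    (hB : ∀ p, B p = (h p.1).bind fun z =>
      if p.2.val ≤ z.val then some (p.1, p.2 + 1) else none)
    (hc1 : (gbar.trans A).trans gbar.symm = B) :
    ∀ x z : Fin n, h x = some z → g x = some z := by
  intro x z hz
  have hBx : ∀ y, B (x, y) = if y ≤ z.castSucc then some (x, y + 1) else none := fun y => by
    rw [hB, hz]; rfl
  obtain ⟨w, hw⟩ : ∃ w, g x = some w := by
    refine Option.ne_none_iff_exists'.mp fun hx => ?_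
    have h0 := hBx 0
    rw [← hc1, PEquiv.conj_lift_apply_of_eq_none hgbar hx, if_pos (Fin.zero_le _)] at h0
    exact Option.some_ne_none _ h0.symm
  have key : ∀ y, y ≤ w.castSucc ∧ (h.symm w).isSome ↔ y ≤ z.castSucc := fun y =>
    iff_of_ite_some_eq_ite_some <| by
      rw [← hBx, ← hc1, PEquiv.conj_lift_apply_of_eq_some hgbar hw (hA (w, y))]; rfl
  rw [hw, Fin.castSucc_injective n (eq_of_forall_le_iff_le_and key)]

/-- With the construction on `A = [n] × [n+1]`: `a, b ∈ I_A` are given by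
`(x, y) a = (x, y + 1)` when `y ≤ x` and `x ∈ dom h⁻¹`, and
`(x, y) b = (x, y + 1)` when `y ≤ x h` and `x ∈ dom h`, and `ḡ` is the lift
`(x, y) ↦ (x g, y)` of `g ∈ I_n`.  If `ḡ a ḡ⁻¹ = b` and `ḡ⁻¹ b ḡ = a`, then
`g` agrees with `h` on `dom h`. -/
theorem conjugator_agrees_with_h (n : ℕ) (h g : PEquiv (Fin n) (Fin n))
    (gbar : PEquiv (Fin n × Fin (n + 1)) (Fin n × Fin (n + 1)))
    (hgbar : ∀ p, gbar p = (g p.1).map fun z => (z, p.2))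
    (A B : PEquiv (Fin n × Fin (n + 1)) (Fin n × Fin (n + 1)))
    (hA : ∀ p, A p =
      if p.2.val ≤ p.1.val ∧ (h.symm p.1).isSome then some (p.1, p.2 + 1)
      else none)
    (hB : ∀ p, B p = (h p.1).bind fun z =>
      if p.2.val ≤ z.val then some (p.1, p.2 + 1) else none)
    (hc1 : (gbar.trans A).trans gbar.symm = B)
    (hc2 : (gbar.symm.trans B).trans gbar = A) :
    ∀ x z : Fin n, h x = some z → g x = some z :=
  conjugator_agrees_with_h_general n h g gbar hgbar A B hA hB hc1
end
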